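/- arXiv:1703.03389 — 4 statements merged into one kernel-verified Lean document; each statement's English description precedes it below -/
import Mathlib

section
/- Let T_k denote the k-th Chebyshev polynomial of the first kind, and let B and E be symmetric real d×d matrices with ‖B‖₂ ≤ 1 and ‖B+E‖₂ ≤ 1 (spectral norms). Then for every k ≥ 0, ‖T_k(B+E) − T_k(B)‖_F ≤ k² ‖E‖_F, where ‖·‖_F is the Frobenius norm. -/
open Matrix Polynomial

/-- Frobenius norm of a real matrix. -/
noncomputable def frobNorm {m n : ℕ} (A : Matrix (Fin m) (Fin n) ℝ) : ℝ :=
  Real.sqrt (∑ i, ∑ j, (A i j) ^ 2)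

/-- Spectral (ℓ²-operator) norm of a real matrix. -/
noncomputable def specNorm {m n : ℕ} (A : Matrix (Fin m) (Fin n) ℝ) : ℝ :=
  ‖LinearMap.toContinuousLinearMap (Matrix.toEuclideanLin A)‖

/-- Evaluation of the `k`-th Chebyshev polynomial of the first kind at a matrix. -/
noncomputable def chebT {d : ℕ} (k : ℕ) (A : Matrix (Fin d) (Fin d) ℝ) :
    Matrix (Fin d) (Fin d) ℝ :=
  Polynomial.aeval A (Polynomial.Chebyshev.T ℝ k)

/-! Writing `x = cos θ`, `y = cos φ`, we have `T_k x - T_k y = cos kθ - cos kφ`; the product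
formula `cos a - cos b = -2 sin ((a + b) / 2) sin ((a - b) / 2)` and `|sin kt| ≤ k |sin t|`
make `T_k` a `k²`-Lipschitz function on `[-1, 1]`.

Diagonalise `A = U diag(α) U⋆` and `B = V diag(β) V⋆`. In this pair of orthonormal bases
`f(A) - f(B)` has entries `(f αᵢ - f βⱼ) (U⋆V)ᵢⱼ` and `A - B` has entries `(αᵢ - βⱼ) (U⋆V)ᵢⱼ`.
The Frobenius norm does not see the change of bases, so a function that is `L`-Lipschitz on the
eigenvalues satisfies `‖f(A) - f(B)‖_F ≤ L ‖A - B‖_F`. A spectral norm at most `1` puts the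
eigenvalues of `B` and `B + E` in `[-1, 1]`. -/

open Real

lemma abs_sin_nat_mul_le (k : ℕ) (t : ℝ) : |sin (k * t)| ≤ k * |sin t| := by
  induction k with
  | zero => simp
  | succ k ih =>
    calc |sin ((k + 1 : ℕ) * t)| = |sin (k * t) * cos t + cos (k * t) * sin t| := by
          push_cast; rw [add_mul, one_mul, sin_add]
      _ ≤ |sin (k * t)| * |cos t| + |cos (k * t)| * |sin t| := by
          rw [← abs_mul, ← abs_mul]; exact abs_add_le _ _
      _ ≤ k * |sin t| * 1 + 1 * |sin t| := by
          gcongr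
          exacts [abs_cos_le_one t, abs_cos_le_one _]
      _ = (k + 1 : ℕ) * |sin t| := by push_cast; ring

lemma abs_sin_int_mul_le (n : ℤ) (t : ℝ) : |sin (n * t)| ≤ |(n : ℝ)| * |sin t| := by
  obtain ⟨k, rfl | rfl⟩ := Int.eq_nat_or_neg n <;>
    simpa [neg_mul, abs_neg] using abs_sin_nat_mul_le k t

lemma abs_cos_int_mul_sub_cos_int_mul_le (n : ℤ) (θ φ : ℝ) :
    |cos (n * θ) - cos (n * φ)| ≤ (n : ℝ) ^ 2 * |cos θ - cos φ| := by
  have hs := abs_sin_int_mul_le n ((θ + φ) / 2)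
  have hd := abs_sin_int_mul_le n ((θ - φ) / 2)
  rw [cos_sub_cos, cos_sub_cos, ← sq_abs (n : ℝ)]
  rw [show ((n : ℝ) * θ + n * φ) / 2 = n * ((θ + φ) / 2) by ring,
    show ((n : ℝ) * θ - n * φ) / 2 = n * ((θ - φ) / 2) by ring]
  simp only [abs_mul, abs_neg, abs_two]
  calc 2 * |sin (n * ((θ + φ) / 2))| * |sin (n * ((θ - φ) / 2))|
      ≤ 2 * (|(n : ℝ)| * |sin ((θ + φ) / 2)|) * (|(n : ℝ)| * |sin ((θ - φ) / 2)|) := by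
        gcongr
    _ = |(n : ℝ)| ^ 2 * (2 * |sin ((θ + φ) / 2)| * |sin ((θ - φ) / 2)|) := by ring

lemma Polynomial.Chebyshev.abs_eval_T_sub_eval_T_le (n : ℤ) {x y : ℝ}
    (hx : x ∈ Set.Icc (-1) 1) (hy : y ∈ Set.Icc (-1) 1) :
    |(T ℝ n).eval x - (T ℝ n).eval y| ≤ (n : ℝ) ^ 2 * |x - y| := by
  rw [← cos_arccos hx.1 hx.2, ← cos_arccos hy.1 hy.2, T_real_cos, T_real_cos]
  exact abs_cos_int_mul_sub_cos_int_mul_le n _ _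

lemma frobNorm_eq_sqrt_trace {m n : ℕ} (A : Matrix (Fin m) (Fin n) ℝ) :
    frobNorm A = √(trace (Aᴴ * A)) := by
  simp only [frobNorm, trace, diag_apply, mul_apply, conjTranspose_apply, star_trivial, sq]
  rw [Finset.sum_comm]

lemma frobNorm_unitary_mul_mul {m n : ℕ} {U : Matrix (Fin m) (Fin m) ℝ}
    {V : Matrix (Fin n) (Fin n) ℝ} (hU : U ∈ unitaryGroup (Fin m) ℝ)
    (hV : V ∈ unitaryGroup (Fin n) ℝ) (X : Matrix (Fin m) (Fin n) ℝ) :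
    frobNorm (U * X * V) = frobNorm X := by
  have hU' : Uᴴ * U = 1 := mem_unitaryGroup_iff'.mp hU
  have hV' : V * Vᴴ = 1 := mem_unitaryGroup_iff.mp hV
  rw [frobNorm_eq_sqrt_trace, frobNorm_eq_sqrt_trace]
  congr 1
  calc trace ((U * X * V)ᴴ * (U * X * V)) = trace (Vᴴ * (Xᴴ * X * V)) := by
        simp only [conjTranspose_mul, Matrix.mul_assoc]
        rw [← Matrix.mul_assoc Uᴴ, hU', Matrix.one_mul]
    _ = trace (Xᴴ * X * V * Vᴴ) := trace_mul_comm _ _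
    _ = trace (Xᴴ * X) := by rw [Matrix.mul_assoc, hV', Matrix.mul_one]

lemma frobNorm_le_mul_of_abs_le {m n : ℕ} {X Y : Matrix (Fin m) (Fin n) ℝ} {L : ℝ} (hL : 0 ≤ L)
    (h : ∀ i j, |X i j| ≤ L * |Y i j|) : frobNorm X ≤ L * frobNorm Y := by
  rw [frobNorm, frobNorm, ← Real.sqrt_sq hL, ← Real.sqrt_mul (sq_nonneg L), Finset.mul_sum]
  refine Real.sqrt_le_sqrt (Finset.sum_le_sum fun i _ => ?_)
  rw [Finset.mul_sum]
  refine Finset.sum_le_sum fun j _ => ?_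
  rw [← sq_abs (X i j), ← sq_abs (Y i j), ← mul_pow]
  exact pow_le_pow_left₀ (abs_nonneg _) (h i j) 2

lemma Matrix.star_mul_sub_mul_eq_hadamard {n R : Type*} [Fintype n] [DecidableEq n]
    [CommRing R] [StarRing R] {U V : Matrix n n R} (hU : U ∈ unitaryGroup n R)
    (hV : V ∈ unitaryGroup n R) (a b : n → R) :
    star U * (U * diagonal a * star U - V * diagonal b * star V) * V =
      of (fun i j => a i - b j) ⊙ (star U * V) := by
  have hU' : star U * U = 1 := mem_unitaryGroup_iff'.mp hU
  have hV' : star V * V = 1 := mem_unitaryGroup_iff'.mp hV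
  have hconj : star U * (U * diagonal a * star U - V * diagonal b * star V) * V =
      diagonal a * (star U * V) - (star U * V) * diagonal b := by
    simp only [Matrix.mul_sub, Matrix.sub_mul, ← Matrix.mul_assoc, hU', Matrix.one_mul]
    simp only [Matrix.mul_assoc, hV', Matrix.mul_one]
  ext i j
  simp [hconj, diagonal_mul, mul_diagonal, sub_mul, mul_comm]

namespace Matrix.IsHermitian

variable {d : ℕ} {A B : Matrix (Fin d) (Fin d) ℝ}

lemma abs_eigenvalues_le_specNorm (hA : A.IsHermitian) (i : Fin d) :
    |hA.eigenvalues i| ≤ specNorm A := by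
  have hv : ‖hA.eigenvectorBasis i‖ = 1 := hA.eigenvectorBasis.orthonormal.1 i
  have hAv :
      toEuclideanLin A (hA.eigenvectorBasis i) = hA.eigenvalues i • hA.eigenvectorBasis i :=
    congrArg (WithLp.toLp 2) (hA.mulVec_eigenvectorBasis i)
  simpa [specNorm, hAv, norm_smul, hv] using
    (LinearMap.toContinuousLinearMap (toEuclideanLin A)).le_opNorm (hA.eigenvectorBasis i)

lemma cfc_eq_mul_diagonal_mul_star (hA : A.IsHermitian) (f : ℝ → ℝ) :
    cfc f A = (hA.eigenvectorUnitary : Matrix (Fin d) (Fin d) ℝ) * diagonal (f ∘ hA.eigenvalues) *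
      star (hA.eigenvectorUnitary : Matrix (Fin d) (Fin d) ℝ) := by
  rw [hA.cfc_eq, IsHermitian.cfc, Unitary.conjStarAlgAut_apply, RCLike.ofReal_real_eq_id,
    Function.id_comp]

lemma frobNorm_cfc_sub_cfc (hA : A.IsHermitian) (hB : B.IsHermitian) (f : ℝ → ℝ) :
    frobNorm (cfc f A - cfc f B) =
      frobNorm (of (fun i j => f (hA.eigenvalues i) - f (hB.eigenvalues j)) ⊙
        (star (hA.eigenvectorUnitary : Matrix (Fin d) (Fin d) ℝ) * hB.eigenvectorUnitary)) := by
  rw [← frobNorm_unitary_mul_mul (Unitary.star_mem hA.eigenvectorUnitary.2)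
    hB.eigenvectorUnitary.2, hA.cfc_eq_mul_diagonal_mul_star, hB.cfc_eq_mul_diagonal_mul_star,
    star_mul_sub_mul_eq_hadamard hA.eigenvectorUnitary.2 hB.eigenvectorUnitary.2]
  rfl

lemma frobNorm_cfc_sub_cfc_le (hA : A.IsHermitian) (hB : B.IsHermitian) (f : ℝ → ℝ) {L : ℝ}
    (hL : 0 ≤ L) (hf : ∀ i j, |f (hA.eigenvalues i) - f (hB.eigenvalues j)| ≤
      L * |hA.eigenvalues i - hB.eigenvalues j|) :
    frobNorm (cfc f A - cfc f B) ≤ L * frobNorm (A - B) := by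
  have hAB : A - B = cfc (id : ℝ → ℝ) A - cfc (id : ℝ → ℝ) B := by
    rw [cfc_id ℝ A hA.isSelfAdjoint, cfc_id ℝ B hB.isSelfAdjoint]
  rw [hAB, hA.frobNorm_cfc_sub_cfc hB, hA.frobNorm_cfc_sub_cfc hB]
  refine frobNorm_le_mul_of_abs_le hL fun i j => ?_
  simp only [hadamard_apply, of_apply, abs_mul, id, ← mul_assoc]
  gcongr
  exact hf i j

end Matrix.IsHermitian

/-- If `B` and `B + E` are symmetric with spectral norm at most 1, then
`‖T_k(B+E) − T_k(B)‖_F ≤ k² ‖E‖_F`. -/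
theorem cheb_matrix_perturbation {d : ℕ} (B E : Matrix (Fin d) (Fin d) ℝ)
    (hB : B.IsSymm) (hE : E.IsSymm)
    (hBnorm : specNorm B ≤ 1) (hBEnorm : specNorm (B + E) ≤ 1) (k : ℕ) :
    frobNorm (chebT k (B + E) - chebT k B) ≤ (k : ℝ) ^ 2 * frobNorm E := by
  have hBE' : (B + E).IsHermitian := isHermitian_iff_isSymm.mpr (hB.add hE)
  have hB' : B.IsHermitian := isHermitian_iff_isSymm.mpr hB
  have key := hBE'.frobNorm_cfc_sub_cfc_le hB' (Chebyshev.T ℝ k).eval (sq_nonneg (k : ℝ))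
    fun i j => mod_cast Chebyshev.abs_eval_T_sub_eval_T_le k
        (abs_le.mp ((hBE'.abs_eigenvalues_le_specNorm i).trans hBEnorm))
        (abs_le.mp ((hB'.abs_eigenvalues_le_specNorm j).trans hBnorm))
  rwa [cfc_polynomial _ _ hBE'.isSelfAdjoint, cfc_polynomial _ _ hB'.isSelfAdjoint,
    add_sub_cancel_left] at key
end

section
/- Let f : 2^𝒴 → ℝ be a monotone, non-negative submodular function on a finite ground set 𝒴. Let X₀ = ∅ and iteratively X_j = X_{j−1} ∪ {i_j}, where the chosen element i_j satisfies f(X_{j−1} ∪ {i_j}) − f(X_{j−1}) ≥ max_{i ∈ 𝒴 \ X_{j−1}} ( f(X_{j−1} ∪ {i}) − f(X_{j−1}) ) − ε_j for some ε_j ≥ 0. Then f(X_k) ≥ (1 − 1/e) · max_{X ⊆ 𝒴, |X| ≤ k} f(X) − Σ_{j=1}^k ε_j. -/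
open Finset

lemma submod_union_bound {𝒴 : Type*} [DecidableEq 𝒴]
    (f : Finset 𝒴 → ℝ)
    (hsub : ∀ X Y : Finset 𝒴, X ⊆ Y → ∀ i ∉ Y,
      f (insert i Y) - f Y ≤ f (insert i X) - f X)
    (X : Finset 𝒴) (S : Finset 𝒴) :
    f (X ∪ S) ≤ f X + ∑ i ∈ S \ X, (f (insert i X) - f X) := by
  induction S using Finset.induction_on with
  | empty => simp
  | @insert a S haS ih =>
    by_cases haX : a ∈ X
    · have h1 : X ∪ insert a S = X ∪ S := by
        ext x; simp only [mem_union, mem_insert]; aesop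
      have h2 : insert a S \ X = S \ X := by
        ext x; simp only [mem_sdiff, mem_insert]; aesop
      rw [h1, h2]; exact ih
    · have haXS : a ∉ X ∪ S := by simp [haX, haS]
      have h1 : X ∪ insert a S = insert a (X ∪ S) := by rw [Finset.union_insert]
      have h2 : insert a S \ X = insert a (S \ X) := by
        ext x; simp only [mem_sdiff, mem_insert]
        constructor
        · rintro ⟨h | h, hx⟩ <;> [exact Or.inl h; exact Or.inr ⟨h, hx⟩]
        · rintro (h | ⟨h, hx⟩)
          · exact ⟨Or.inl h, h ▸ haX⟩
          · exact ⟨Or.inr h, hx⟩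
      have h3 : a ∉ S \ X := by simp [haS]
      rw [h1, h2, Finset.sum_insert h3]
      have := hsub X (X ∪ S) Finset.subset_union_left a haXS
      linarith [ih]

/-- Noisy greedy guarantee for monotone non-negative submodular functions:
if each greedy step loses at most `ε_j` compared to the best marginal gain, then
`f(X_k) ≥ (1 − 1/e)·max_{|X| ≤ k} f(X) − Σ_{j=1}^k ε_j`. -/
theorem noisy_greedy_guarantee {𝒴 : Type*} [Fintype 𝒴] [DecidableEq 𝒴]
    (f : Finset 𝒴 → ℝ)
    (hsub : ∀ X Y : Finset 𝒴, X ⊆ Y → ∀ i ∉ Y,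
      f (insert i Y) - f Y ≤ f (insert i X) - f X)
    (hmono : ∀ X Y : Finset 𝒴, X ⊆ Y → f X ≤ f Y)
    (hnonneg : ∀ X : Finset 𝒴, 0 ≤ f X)
    (X : ℕ → Finset 𝒴) (ι : ℕ → 𝒴) (ε : ℕ → ℝ)
    (hε : ∀ j, 0 ≤ ε j)
    (hX0 : X 0 = ∅)
    (hstep : ∀ j : ℕ, X (j + 1) = insert (ι (j + 1)) (X j))
    (hgain : ∀ j : ℕ, ∀ i ∉ X j,
      f (insert i (X j)) - f (X j) - ε (j + 1) ≤ f (X (j + 1)) - f (X j))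
    (k : ℕ) (Z : Finset 𝒴) (hZ : Z.card ≤ k) :
    (1 - 1 / Real.exp 1) * f Z - ∑ j ∈ Finset.range k, ε (j + 1) ≤ f (X k) := by
  rcases Nat.eq_zero_or_pos k with hk0 | hk
  · subst hk0
    have hZe : Z = ∅ := Finset.card_eq_zero.mp (Nat.le_zero.mp hZ)
    subst hZe
    rw [hX0]
    simp only [Finset.range_zero, Finset.sum_empty, sub_zero]
    have h1 : 0 < 1 / Real.exp 1 := by positivity
    nlinarith [hnonneg (∅ : Finset 𝒴)]
  -- k ≥ 1 case
  set r : ℝ := 1 - 1 / (k : ℝ) with hr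
  have hk' : (1 : ℝ) ≤ (k : ℝ) := by exact_mod_cast hk
  have hkpos : (0 : ℝ) < k := by linarith
  have hr0 : 0 ≤ r := by
    rw [hr]; rw [sub_nonneg, div_le_one hkpos]; exact hk'
  have hr1 : r ≤ 1 := by
    rw [hr]; have : 0 < 1 / (k:ℝ) := by positivity
    linarith
  set g : ℕ → ℝ := fun j => f Z - f (X j) with hg
  clear_value r g
  -- recurrence
  have hrec : ∀ j : ℕ, g (j + 1) ≤ r * g j + ε (j + 1) := by
    intro j
    set M : ℝ := f (X (j+1)) - f (X j) + ε (j+1) with hM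
    have hM0 : 0 ≤ M := by
      have : f (X j) ≤ f (X (j+1)) := by
        rw [hstep j]; exact hmono _ _ (Finset.subset_insert _ _)
      have := hε (j+1); rw [hM]; linarith
    have hbound : f Z ≤ f (X j) + (k : ℝ) * M := by
      have h1 : f Z ≤ f (X j ∪ Z) := hmono _ _ Finset.subset_union_right
      have h2 := submod_union_bound f hsub (X j) Z
      have h3 : ∑ i ∈ Z \ X j, (f (insert i (X j)) - f (X j)) ≤ (Z \ X j).card • M := by
        apply Finset.sum_le_card_nsmul
        intro i hi
        have hiX : i ∉ X j := (Finset.mem_sdiff.mp hi).2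
        have := hgain j i hiX
        rw [hM]; linarith
      have h4 : ((Z \ X j).card : ℝ) * M ≤ (k : ℝ) * M := by
        apply mul_le_mul_of_nonneg_right _ hM0
        have : (Z \ X j).card ≤ Z.card := Finset.card_le_card (Finset.sdiff_subset)
        exact_mod_cast le_trans this hZ
      rw [nsmul_eq_mul] at h3
      linarith
    -- from hbound: g j ≤ k * M = k*(g j - g (j+1) + ε)
    have heq : g j - g (j+1) + ε (j+1) = M := by simp only [hg, hM]; ring
    have hthis : g j ≤ (k:ℝ) * (g j - g (j+1) + ε (j+1)) := by
      rw [heq]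
      have : g j = f Z - f (X j) := by simp only [hg]
      rw [this]; linarith
    have hexp : r * g j + ε (j+1) - g (j+1) = ((k:ℝ) * (g j - g (j+1) + ε (j+1)) - g j) / k := by
      rw [hr]; field_simp; ring
    have hpos : 0 ≤ r * g j + ε (j+1) - g (j+1) := by
      rw [hexp]; exact div_nonneg (by linarith) hkpos.le
    linarith
  -- iterate the recurrence
  have hiter : ∀ n : ℕ, g n ≤ r ^ n * g 0 + ∑ j ∈ Finset.range n, ε (j + 1) := by
    intro n
    induction n with
    | zero => simp
    | succ n ih =>
      have h1 := hrec n
      have h2 : r * g n ≤ r * (r ^ n * g 0 + ∑ j ∈ Finset.range n, ε (j + 1)) :=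
        mul_le_mul_of_nonneg_left ih hr0
      have h3 : r * ∑ j ∈ Finset.range n, ε (j + 1) ≤ ∑ j ∈ Finset.range n, ε (j + 1) := by
        have hs : 0 ≤ ∑ j ∈ Finset.range n, ε (j + 1) :=
          Finset.sum_nonneg fun j _ => hε (j+1)
        nlinarith
      rw [Finset.sum_range_succ]
      calc g (n+1) ≤ r * g n + ε (n+1) := h1
        _ ≤ r * (r ^ n * g 0 + ∑ j ∈ Finset.range n, ε (j + 1)) + ε (n+1) := by linarith
        _ ≤ r ^ (n+1) * g 0 + (∑ j ∈ Finset.range n, ε (j + 1) + ε (n+1)) := by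
            have he : r * (r ^ n * g 0 + ∑ j ∈ Finset.range n, ε (j + 1))
                = r ^ (n+1) * g 0 + r * ∑ j ∈ Finset.range n, ε (j + 1) := by ring
            linarith [he, h3]
  have hrk : r ^ k ≤ 1 / Real.exp 1 := by
    have h1 : r ≤ Real.exp (-(1 / (k:ℝ))) := by
      have := Real.add_one_le_exp (-(1/(k:ℝ)))
      rw [hr]; linarith
    have h2 : r ^ k ≤ (Real.exp (-(1/(k:ℝ)))) ^ k := pow_le_pow_left₀ hr0 h1 k
    have h3 : (Real.exp (-(1/(k:ℝ)))) ^ k = Real.exp (-(1/(k:ℝ)) * k) := by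
      rw [← Real.exp_nat_mul]; ring_nf
    have h4 : -(1/(k:ℝ)) * k = -1 := by field_simp
    rw [h3, h4] at h2
    rw [Real.exp_neg] at h2
    rw [one_div]; exact h2
  have hg0 : g 0 ≤ f Z := by
    simp only [hg]; have := hnonneg (X 0); linarith
  have hg0' : 0 ≤ g 0 := by
    simp only [hg, hX0]; have := hmono ∅ Z (Finset.empty_subset Z); linarith
  have hfZ : 0 ≤ f Z := hnonneg Z
  have hkey := hiter k
  have h5 : r ^ k * g 0 ≤ (1 / Real.exp 1) * f Z := by
    calc r ^ k * g 0 ≤ r ^ k * f Z := mul_le_mul_of_nonneg_left hg0 (pow_nonneg hr0 k)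
      _ ≤ (1 / Real.exp 1) * f Z := mul_le_mul_of_nonneg_right hrk hfZ
  have hgk : g k = f Z - f (X k) := by simp only [hg]
  linarith [hkey, h5, hgk]
end

section
/- The function f(X) = log det(L_X), where L is a positive definite d×d matrix and L_X is the principal submatrix indexed by X ⊆ {1,…,d} (with f(∅) = 0), is submodular: for all X ⊆ Y ⊂ {1,…,d} and i ∉ Y, log det L_{X∪{i}} − log det L_X ≥ log det L_{Y∪{i}} − log det L_Y. -/
open Matrix

/-- Principal submatrix of `L` indexed by a finite set `X`. -/
def subKer {d : ℕ} (L : Matrix (Fin d) (Fin d) ℝ) (X : Finset (Fin d)) :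
    Matrix {i // i ∈ X} {i // i ∈ X} ℝ :=
  L.submatrix (fun i => (i : Fin d)) (fun i => (i : Fin d))

/-!
Expanding `det L_{S ∪ {i}}` along the block `L_S` gives `det L_S · s(S)`, where
`s(S) = L_ii - bᵀ L_S⁻¹ b` (with `b = L_{S,i}`) is the Schur complement. So the claim is
`log s(Y) ≤ log s(X)`. Completing the square shows that `-bᵀ L_S⁻¹ b` is the minimum over
`x` of `2 xᵀb + xᵀ L_S x`; for `X ⊆ Y`, every competitor on `X` is one on `Y` after extending
it by zero, so the minimum over `Y` is smaller, i.e. `s(Y) ≤ s(X)`.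
-/

open Function

namespace Matrix

variable {m n R : Type*} [Fintype m] [Fintype n]

section ExtendByZero

variable [CommSemiring R] {f : m → n}

lemma extend_zero_dotProduct (hf : Injective f) (x : m → R) (w : n → R) :
    extend f x 0 ⬝ᵥ w = x ⬝ᵥ (w ∘ f) :=
  (Fintype.sum_of_injective f hf _ _
    (fun j hj => by rw [extend_apply' _ _ _ (by simpa using hj), Pi.zero_apply, zero_mul])
    (fun k => by rw [hf.extend_apply]; rfl)).symm

lemma mulVec_extend_zero (hf : Injective f) (M : Matrix n n R) (x : m → R) :
    M *ᵥ extend f x 0 = M.submatrix id f *ᵥ x := by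
  ext j
  rw [mulVec, dotProduct_comm, extend_zero_dotProduct hf, dotProduct_comm]
  rfl

lemma extend_zero_dotProduct_mulVec_extend_zero (hf : Injective f) (M : Matrix n n R)
    (x : m → R) : extend f x 0 ⬝ᵥ (M *ᵥ extend f x 0) = x ⬝ᵥ (M.submatrix f f *ᵥ x) := by
  rw [extend_zero_dotProduct hf, mulVec_extend_zero hf]
  rfl

end ExtendByZero

lemma IsHermitian.dotProduct_mulVec_comm {A : Matrix n n ℝ} (hA : A.IsHermitian)
    (x y : n → ℝ) : x ⬝ᵥ (A *ᵥ y) = y ⬝ᵥ (A *ᵥ x) := by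
  rw [dotProduct_mulVec, ← mulVec_transpose, dotProduct_comm,
    ← conjTranspose_eq_transpose_of_trivial, hA.eq]

variable [DecidableEq n]

lemma PosDef.isLeast_two_dotProduct_add_dotProduct_mulVec {A : Matrix n n ℝ} (hA : A.PosDef)
    (b : n → ℝ) :
    IsLeast (Set.range fun x => 2 * (x ⬝ᵥ b) + x ⬝ᵥ (A *ᵥ x)) (-(b ⬝ᵥ (A⁻¹ *ᵥ b))) := by
  set y := A⁻¹ *ᵥ b
  have hy : A *ᵥ y = b := by
    rw [mulVec_mulVec, A.mul_nonsing_inv (isUnit_iff_ne_zero.mpr hA.det_pos.ne'), one_mulVec]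
  have hsquare (x : n → ℝ) :
      2 * (x ⬝ᵥ b) + x ⬝ᵥ (A *ᵥ x) = (x + y) ⬝ᵥ (A *ᵥ (x + y)) - b ⬝ᵥ y := by
    have hyx : y ⬝ᵥ (A *ᵥ x) = x ⬝ᵥ b := by rw [hA.isHermitian.dotProduct_mulVec_comm, hy]
    rw [mulVec_add, dotProduct_add, add_dotProduct, add_dotProduct, hyx, hy, dotProduct_comm y b]
    ring
  refine ⟨⟨-y, by simp only [hsquare, neg_add_cancel, zero_dotProduct, zero_sub]⟩, ?_⟩
  rintro _ ⟨x, rfl⟩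
  dsimp only
  rw [hsquare, sub_eq_add_neg]
  exact le_add_of_nonneg_left (by simpa using hA.posSemidef.dotProduct_mulVec_nonneg (x + y))

lemma PosDef.dotProduct_inv_submatrix_mulVec_le [DecidableEq m] {A : Matrix n n ℝ}
    (hA : A.PosDef) {f : m → n} (hf : Injective f) (b : n → ℝ) :
    (b ∘ f) ⬝ᵥ ((A.submatrix f f)⁻¹ *ᵥ (b ∘ f)) ≤ b ⬝ᵥ (A⁻¹ *ᵥ b) := by
  refine neg_le_neg_iff.mp <|
    ((hA.submatrix hf).isLeast_two_dotProduct_add_dotProduct_mulVec (b ∘ f)).mono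
      (hA.isLeast_two_dotProduct_add_dotProduct_mulVec b) ?_
  rintro _ ⟨x, rfl⟩
  refine ⟨extend f x 0, ?_⟩
  dsimp only
  rw [extend_zero_dotProduct hf, extend_zero_dotProduct_mulVec_extend_zero hf]

end Matrix

section SubKer

variable {d : ℕ} {L : Matrix (Fin d) (Fin d) ℝ}

lemma subKer_posDef (hL : L.PosDef) (S : Finset (Fin d)) : (subKer L S).PosDef :=
  hL.submatrix Subtype.val_injective

noncomputable def schurComplement (L : Matrix (Fin d) (Fin d) ℝ) (i : Fin d)
    (S : Finset (Fin d)) : ℝ :=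
  L i i - (fun k : S => L i k) ⬝ᵥ ((subKer L S)⁻¹ *ᵥ fun k : S => L i k)

lemma schurComplement_anti (hL : L.PosDef) (i : Fin d) {X Y : Finset (Fin d)} (hXY : X ⊆ Y) :
    schurComplement L i Y ≤ schurComplement L i X :=
  sub_le_sub_left ((subKer_posDef hL Y).dotProduct_inv_submatrix_mulVec_le
    (f := fun k : X => ⟨k, hXY k.2⟩) (fun _ _ h => Subtype.ext (congrArg Subtype.val h :)) _) _

lemma det_subKer_insert (hL : L.PosDef) {i : Fin d} {S : Finset (Fin d)} (hi : i ∉ S) :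
    (subKer L (insert i S)).det = (subKer L S).det * schurComplement L i S := by
  classical
  let e : {j // j ∈ insert i S} ≃ {j // j ∈ S} ⊕ Unit :=
    (Finset.subtypeInsertEquivOption hi).trans (Equiv.optionEquivSumPUnit _)
  have hblocks : (subKer L (insert i S)).submatrix e.symm e.symm =
      fromBlocks (subKer L S) (replicateCol Unit fun k : S => L i k)
        (replicateRow Unit fun k : S => L i k) (of fun _ _ => L i i) := by
    have hsymm (j : Fin d) : L j i = L i j := by simpa using hL.isHermitian.apply i j
    ext (k | _) (l | _) <;> simp [e, subKer, Finset.subtypeInsertEquivOption, hsymm]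
  have := (subKer L S).invertibleOfIsUnitDet (subKer_posDef hL S).det_pos.ne'.isUnit
  rw [← det_submatrix_equiv_self e.symm, hblocks, det_fromBlocks₁₁]
  congr 1
  rw [det_unique]
  simp only [schurComplement, Matrix.sub_apply, of_apply, invOf_eq_nonsing_inv, Matrix.mul_assoc]
  rfl

lemma schurComplement_pos (hL : L.PosDef) {i : Fin d} {S : Finset (Fin d)} (hi : i ∉ S) :
    0 < schurComplement L i S :=
  pos_of_mul_pos_right (det_subKer_insert hL hi ▸ (subKer_posDef hL _).det_pos)
    (subKer_posDef hL S).det_pos.le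

end SubKer

/-- Submodularity of `X ↦ log det L_X` for positive definite `L`:
for `X ⊆ Y` and `i ∉ Y`,
`log det L_{X∪{i}} − log det L_X ≥ log det L_{Y∪{i}} − log det L_Y`. -/
theorem logdet_submodular {d : ℕ} (L : Matrix (Fin d) (Fin d) ℝ) (hL : L.PosDef)
    (X Y : Finset (Fin d)) (hXY : X ⊆ Y) (i : Fin d) (hi : i ∉ Y) :
    Real.log (subKer L (insert i Y)).det - Real.log (subKer L Y).det ≤
      Real.log (subKer L (insert i X)).det - Real.log (subKer L X).det := by
  have hiX : i ∉ X := fun h => hi (hXY h)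
  rw [det_subKer_insert hL hi, det_subKer_insert hL hiX,
    Real.log_mul (subKer_posDef hL Y).det_pos.ne' (schurComplement_pos hL hi).ne',
    Real.log_mul (subKer_posDef hL X).det_pos.ne' (schurComplement_pos hL hiX).ne',
    add_sub_cancel_left, add_sub_cancel_left]
  exact Real.log_le_log (schurComplement_pos hL hi) (schurComplement_anti hL i hXY)
end

section
/- Let p_n(x) = Σ_{k=0}^n c_k T_k( (2x − 1)/(1−2δ) ) be a degree-n polynomial written in the shifted Chebyshev basis (for δ ∈ (0,1/2)), and let A, B be symmetric d×d matrices with eigenvalues in [δ, 1−δ]. Then ‖p_n(A) − p_n(B)‖_F ≤ ( Σ_{k=0}^n |c_k| k² ) · (2/(1−2δ)) · ‖A − B‖_F. -/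
open Matrix Polynomial

/-- `p_n(A) = Σ_{k=0}^n c_k T_k((2A − I)/(1−2δ))`, the shifted Chebyshev expansion
evaluated at a matrix. -/
noncomputable def chebExpansion {d : ℕ} (δ : ℝ) (n : ℕ) (c : ℕ → ℝ)
    (A : Matrix (Fin d) (Fin d) ℝ) : Matrix (Fin d) (Fin d) ℝ :=
  ∑ k ∈ Finset.range (n + 1),
    c k • Polynomial.aeval ((1 - 2 * δ)⁻¹ • (2 • A - 1)) (Polynomial.Chebyshev.T ℝ k)

/-! Conjugating by the eigenvector matrices `U` of `A` and `V` of `B` turns `f(A) − f(B)`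
into the matrix with entries `(f λᵢ − f μⱼ) (U⋆V)ᵢⱼ` and `A − B` into the one with entries
`(λᵢ − μⱼ) (U⋆V)ᵢⱼ`. As the Frobenius norm is unitarily invariant, a function that is
`L`-Lipschitz on the two spectra satisfies `‖f(A) − f(B)‖_F ≤ L ‖A − B‖_F`. The expansion is
`f(A)` for `f x = Σ c_k T_k (s x)`, where `s` is affine of slope `2/(1−2δ)` and maps `[δ, 1−δ]`
into `[−1, 1]`; there Markov's bound `|T_k'| ≤ T_k'(1) = k²` makes `T_k` `k²`-Lipschitz. -/

open scoped Matrix.Norms.Frobenius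

namespace Matrix
variable {m n 𝕜 : Type*} [Fintype m] [Fintype n] [RCLike 𝕜]

theorem frobenius_norm_sq_eq_re_trace (X : Matrix m n 𝕜) :
    ‖X‖ ^ 2 = RCLike.re (Xᴴ * X).trace := by
  rw [frobenius_norm_def, ← Real.rpow_natCast, ← Real.rpow_mul (by positivity), Finset.sum_comm]
  simp [trace, mul_apply, RCLike.conj_mul]

theorem frobenius_norm_le_of_forall_norm_apply_le {X Y : Matrix m n 𝕜}
    (h : ∀ i j, ‖X i j‖ ≤ ‖Y i j‖) : ‖X‖ ≤ ‖Y‖ := by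
  rw [frobenius_norm_def, frobenius_norm_def]
  gcongr with i _ j _
  exact h i j

variable [DecidableEq n]

theorem frobenius_norm_unitary_mul {U : Matrix n n 𝕜} (hU : U ∈ unitaryGroup n 𝕜)
    (X : Matrix n m 𝕜) : ‖U * X‖ = ‖X‖ := by
  rw [← pow_left_inj₀ (norm_nonneg _) (norm_nonneg _) two_ne_zero,
    frobenius_norm_sq_eq_re_trace, frobenius_norm_sq_eq_re_trace, conjTranspose_mul,
    Matrix.mul_assoc, ← Matrix.mul_assoc Uᴴ, ← star_eq_conjTranspose,
    (mem_unitaryGroup_iff').1 hU, Matrix.one_mul]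

theorem frobenius_norm_mul_unitary {U : Matrix n n 𝕜} (hU : U ∈ unitaryGroup n 𝕜)
    (X : Matrix m n 𝕜) : ‖X * U‖ = ‖X‖ := by
  rw [← frobenius_norm_conjTranspose, conjTranspose_mul, ← star_eq_conjTranspose,
    frobenius_norm_unitary_mul (Unitary.star_mem hU), frobenius_norm_conjTranspose]

theorem unitary_conj_sub_unitary_conj {U V : Matrix n n 𝕜} (hU : U ∈ unitaryGroup n 𝕜)
    (hV : V ∈ unitaryGroup n 𝕜) (a b : n → 𝕜) :
    star U * (U * diagonal a * star U - V * diagonal b * star V) * V =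
      of fun i j => (a i - b j) * (star U * V) i j := by
  have hU' : star U * U = 1 := (mem_unitaryGroup_iff').1 hU
  have hV' : star V * V = 1 := (mem_unitaryGroup_iff').1 hV
  calc star U * (U * diagonal a * star U - V * diagonal b * star V) * V
      = diagonal a * (star U * V) - star U * V * diagonal b := by
        simp only [Matrix.mul_sub, Matrix.sub_mul, ← Matrix.mul_assoc, hU', Matrix.one_mul]
        simp only [Matrix.mul_assoc, hV', Matrix.mul_one]
    _ = _ := by
        ext i j
        simp [sub_mul, mul_comm]

theorem IsHermitian.frobenius_norm_cfc_sub_cfc_le {A B : Matrix n n 𝕜} (hA : A.IsHermitian)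
    (hB : B.IsHermitian) {f : ℝ → ℝ} {L : ℝ} (hL : 0 ≤ L)
    (hf : ∀ x ∈ spectrum ℝ A, ∀ y ∈ spectrum ℝ B, |f x - f y| ≤ L * |x - y|) :
    ‖cfc f A - cfc f B‖ ≤ L * ‖A - B‖ := by
  set U := (hA.eigenvectorUnitary : Matrix n n 𝕜)
  set V := (hB.eigenvectorUnitary : Matrix n n 𝕜)
  have hU : U ∈ unitaryGroup n 𝕜 := hA.eigenvectorUnitary.2
  have hV : V ∈ unitaryGroup n 𝕜 := hB.eigenvectorUnitary.2
  have hconj (g : ℝ → ℝ) : star U * (cfc g A - cfc g B) * V = of fun i j =>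
      ((g (hA.eigenvalues i) - g (hB.eigenvalues j) : ℝ) : 𝕜) * (star U * V) i j := by
    rw [hA.cfc_eq, hB.cfc_eq, IsHermitian.cfc, IsHermitian.cfc, Unitary.conjStarAlgAut_apply,
      Unitary.conjStarAlgAut_apply, unitary_conj_sub_unitary_conj hU hV]
    simp
  have hid : star U * (A - B) * V = of fun i j =>
      ((hA.eigenvalues i - hB.eigenvalues j : ℝ) : 𝕜) * (star U * V) i j := by
    simpa only [cfc_id ℝ A hA.isSelfAdjoint, cfc_id ℝ B hB.isSelfAdjoint, id] using hconj id
  calc ‖cfc f A - cfc f B‖ = ‖star U * (cfc f A - cfc f B) * V‖ := by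
        rw [frobenius_norm_mul_unitary hV, frobenius_norm_unitary_mul (Unitary.star_mem hU)]
    _ ≤ ‖L • (star U * (A - B) * V)‖ := by
        rw [hconj, hid]
        refine frobenius_norm_le_of_forall_norm_apply_le fun i j => ?_
        simp only [of_apply, smul_apply, norm_mul, RCLike.norm_ofReal, norm_smul,
          Real.norm_eq_abs, abs_of_nonneg hL, ← mul_assoc]
        gcongr
        exact hf _ (hA.eigenvalues_mem_spectrum_real i) _ (hB.eigenvalues_mem_spectrum_real j)
    _ = L * ‖A - B‖ := by
        rw [norm_smul, Real.norm_of_nonneg hL, frobenius_norm_mul_unitary hV,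
          frobenius_norm_unitary_mul (Unitary.star_mem hU)]

end Matrix

theorem Polynomial.Chebyshev.abs_eval_T_real_sub_le (k : ℤ) {x y : ℝ}
    (hx : x ∈ Set.Icc (-1 : ℝ) 1) (hy : y ∈ Set.Icc (-1 : ℝ) 1) :
    |(T ℝ k).eval x - (T ℝ k).eval y| ≤ (k : ℝ) ^ 2 * |x - y| := by
  have hderiv : ∀ z ∈ Set.Icc (-1 : ℝ) 1,
      ‖deriv (fun z => (T ℝ k).eval z) z‖ ≤ (k : ℝ) ^ 2 := by
    intro z hz
    rw [Polynomial.deriv, Real.norm_eq_abs, ← derivative_T_eval_one (R := ℝ) k]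
    simpa using abs_iterate_derivative_T_real_le k 1 (abs_le.2 hz)
  simpa only [Real.norm_eq_abs] using (convex_Icc (-1 : ℝ) 1).norm_image_sub_le_of_norm_deriv_le
    (fun z _ => (T ℝ k).differentiableAt) hderiv hy hx

theorem frobNorm_eq_norm {m n : ℕ} (A : Matrix (Fin m) (Fin n) ℝ) : frobNorm A = ‖A‖ := by
  rw [frobNorm, frobenius_norm_def, Real.sqrt_eq_rpow]
  simp [Real.norm_eq_abs, sq_abs]

noncomputable def chebShift (δ x : ℝ) : ℝ := (1 - 2 * δ)⁻¹ * (2 * x - 1)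

@[fun_prop]
theorem continuous_chebShift (δ : ℝ) : Continuous (chebShift δ) := by
  unfold chebShift
  fun_prop

theorem chebShift_mem_Icc {δ x : ℝ} (hδ : δ < 1 / 2) (hx : x ∈ Set.Icc δ (1 - δ)) :
    chebShift δ x ∈ Set.Icc (-1 : ℝ) 1 := by
  have h : 0 < 1 - 2 * δ := by linarith
  obtain ⟨hx₁, hx₂⟩ := hx
  constructor
  · rw [chebShift, le_inv_mul_iff₀ h]; linarith
  · rw [chebShift, inv_mul_le_iff₀ h]; linarith

theorem abs_chebShift_sub {δ : ℝ} (hδ : δ < 1 / 2) (x y : ℝ) :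
    |chebShift δ x - chebShift δ y| = 2 / (1 - 2 * δ) * |x - y| := by
  have h : 0 < 1 - 2 * δ := by linarith
  rw [chebShift, chebShift, ← mul_sub, abs_mul, abs_inv, abs_of_pos h,
    show 2 * x - 1 - (2 * y - 1) = 2 * (x - y) by ring, abs_mul, abs_two, div_eq_inv_mul,
    mul_assoc]

noncomputable def shiftedChebSum (δ : ℝ) (n : ℕ) (c : ℕ → ℝ) (x : ℝ) : ℝ :=
  ∑ k ∈ Finset.range (n + 1), c k * (Chebyshev.T ℝ k).eval (chebShift δ x)

theorem chebExpansion_eq_cfc {d : ℕ} (δ : ℝ) (n : ℕ) (c : ℕ → ℝ)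
    {A : Matrix (Fin d) (Fin d) ℝ} (hA : IsSelfAdjoint A) :
    chebExpansion δ n c A = cfc (shiftedChebSum δ n c) A := by
  have hshift : cfc (chebShift δ) A = (1 - 2 * δ)⁻¹ • (2 • A - 1) := by
    unfold chebShift
    rw [cfc_const_mul .., cfc_sub .., cfc_const_mul .., cfc_id' .., cfc_const_one ..]
    simp [two_smul, two_mul]
  unfold chebExpansion shiftedChebSum
  rw [← Finset.sum_fn, cfc_sum ..]
  refine Finset.sum_congr rfl fun k _ => ?_
  rw [cfc_const_mul .., cfc_map_polynomial .., hshift]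

theorem abs_shiftedChebSum_sub_le {δ : ℝ} (hδ : δ < 1 / 2) (n : ℕ) (c : ℕ → ℝ) {x y : ℝ}
    (hx : x ∈ Set.Icc δ (1 - δ)) (hy : y ∈ Set.Icc δ (1 - δ)) :
    |shiftedChebSum δ n c x - shiftedChebSum δ n c y| ≤
      (∑ k ∈ Finset.range (n + 1), |c k| * (k : ℝ) ^ 2) * (2 / (1 - 2 * δ)) * |x - y| := by
  calc |shiftedChebSum δ n c x - shiftedChebSum δ n c y|
      = |∑ k ∈ Finset.range (n + 1), c k *
          ((Chebyshev.T ℝ k).eval (chebShift δ x) - (Chebyshev.T ℝ k).eval (chebShift δ y))| := by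
        simp only [shiftedChebSum, ← Finset.sum_sub_distrib, mul_sub]
    _ ≤ ∑ k ∈ Finset.range (n + 1),
          |c k| * ((k : ℝ) ^ 2 * |chebShift δ x - chebShift δ y|) := by
        refine (Finset.abs_sum_le_sum_abs _ _).trans (Finset.sum_le_sum fun k _ => ?_)
        rw [abs_mul]
        gcongr
        exact_mod_cast Chebyshev.abs_eval_T_real_sub_le k (chebShift_mem_Icc hδ hx)
          (chebShift_mem_Icc hδ hy)
    _ = _ := by
        rw [abs_chebShift_sub hδ, Finset.sum_mul, Finset.sum_mul]
        exact Finset.sum_congr rfl fun k _ => by ring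

theorem chebExpansion_perturbation_general {d : ℕ} (δ : ℝ) (hδ' : δ < 1 / 2)
    (n : ℕ) (c : ℕ → ℝ) (A B : Matrix (Fin d) (Fin d) ℝ)
    (hA : A.IsHermitian) (hB : B.IsHermitian)
    (hAeig : ∀ i, hA.eigenvalues i ∈ Set.Icc δ (1 - δ))
    (hBeig : ∀ i, hB.eigenvalues i ∈ Set.Icc δ (1 - δ)) :
    frobNorm (chebExpansion δ n c A - chebExpansion δ n c B) ≤
      (∑ k ∈ Finset.range (n + 1), |c k| * (k : ℝ) ^ 2) * (2 / (1 - 2 * δ)) *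
        frobNorm (A - B) := by
  have hspectrum {M : Matrix (Fin d) (Fin d) ℝ} (hM : M.IsHermitian)
      (hMeig : ∀ i, hM.eigenvalues i ∈ Set.Icc δ (1 - δ)) : spectrum ℝ M ⊆ Set.Icc δ (1 - δ) := by
    rw [hM.spectrum_real_eq_range_eigenvalues]
    exact Set.range_subset_iff.2 hMeig
  have hL : 0 ≤ (∑ k ∈ Finset.range (n + 1), |c k| * (k : ℝ) ^ 2) * (2 / (1 - 2 * δ)) :=
    mul_nonneg (by positivity) (div_nonneg zero_le_two (by linarith))
  rw [chebExpansion_eq_cfc δ n c hA.isSelfAdjoint, chebExpansion_eq_cfc δ n c hB.isSelfAdjoint,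
    frobNorm_eq_norm, frobNorm_eq_norm]
  exact hA.frobenius_norm_cfc_sub_cfc_le hB hL fun x hx y hy =>
    abs_shiftedChebSum_sub_le hδ' n c (hspectrum hA hAeig hx) (hspectrum hB hBeig hy)

/-- Lipschitz-type bound for shifted Chebyshev expansions: if `A`, `B` are symmetric
with eigenvalues in `[δ, 1−δ]`, then
`‖p_n(A) − p_n(B)‖_F ≤ (Σ_{k=0}^n |c_k| k²)·(2/(1−2δ))·‖A−B‖_F`. -/
theorem chebExpansion_perturbation {d : ℕ} (δ : ℝ) (hδ : 0 < δ) (hδ' : δ < 1 / 2)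
    (n : ℕ) (c : ℕ → ℝ) (A B : Matrix (Fin d) (Fin d) ℝ)
    (hA : A.IsHermitian) (hB : B.IsHermitian)
    (hAeig : ∀ i, hA.eigenvalues i ∈ Set.Icc δ (1 - δ))
    (hBeig : ∀ i, hB.eigenvalues i ∈ Set.Icc δ (1 - δ)) :
    frobNorm (chebExpansion δ n c A - chebExpansion δ n c B) ≤
      (∑ k ∈ Finset.range (n + 1), |c k| * (k : ℝ) ^ 2) * (2 / (1 - 2 * δ)) *
        frobNorm (A - B) :=
  chebExpansion_perturbation_general δ hδ' n c A B hA hB hAeig hBeig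
end
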